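/- arXiv:1507.06450 — 7 statements merged into one kernel-verified Lean document; each statement's English description precedes it below -/
import Mathlib

section
/- If n is a positive integer with n > 6, then Euler's totient function satisfies φ(n) ≥ n / log₂(n). -/
/-!
Euler's product gives `φ n = n ∏_{p ∣ n} (1 - 1/p)`. Listing the `k = ω(n)` prime factors in
increasing order, the `i`-th one is at least `i + 1`, so the product is at least
`∏_{i=1}^k (1 - 1/(i+1)) = 1/(k+1)`, i.e. `n ≤ (k+1) φ(n)`. On the other hand
`2^(k+1) ≤ n` once `n > 6`: for `k ≥ 3` some prime factor is at least `4`, which pays for the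
extra factor `2` in `∏_{p ∣ n} p ≥ 2^k`, and the cases `k ≤ 2` are checked directly.
Hence `k + 1 ≤ log₂ n`.
-/

open Finset

theorem Finset.one_le_card_add_one_mul_prod_one_sub_inv {K : Type*} [Field K] [LinearOrder K]
    [IsStrictOrderedRing K] (S : Finset ℕ) (hS : ∀ p ∈ S, 2 ≤ p) :
    1 ≤ (#S + 1 : K) * ∏ p ∈ S, (1 - (p : K)⁻¹) := by
  induction S using Finset.induction_on_max with
  | empty => simp
  | insert a s hlt ih =>
    have ha : 2 ≤ a := hS a (mem_insert_self a s)
    have hs : ∀ p ∈ s, 2 ≤ p := fun p hp => hS p (mem_insert_of_mem hp)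
    have hcard : #s + 2 ≤ a := by
      have := card_le_card fun p hp => mem_Ico.mpr ⟨hs p hp, hlt p hp⟩
      simp only [Nat.card_Ico] at this
      omega
    have hcardK : (#s + 2 : K) ≤ a := by exact_mod_cast hcard
    have hfactor : (#s + 1 : K) ≤ (#s + 2) * (1 - (a : K)⁻¹) := by
      have ha0 : (0 : K) < a := hcardK.trans_lt' (by positivity)
      have : (#s + 2 : K) * (a : K)⁻¹ ≤ 1 := by
        rw [← div_eq_mul_inv]; exact (div_le_one ha0).mpr hcardK
      linarith
    have hprod : 0 ≤ ∏ p ∈ s, (1 - (p : K)⁻¹) := prod_nonneg fun p hp => by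
      have : (1 : K) ≤ p := by exact_mod_cast (hs p hp).trans' one_le_two
      exact sub_nonneg.mpr (inv_le_one_of_one_le₀ this)
    have hane : a ∉ s := fun h => lt_irrefl a (hlt a h)
    rw [prod_insert hane, card_insert_of_notMem hane]
    calc 1 ≤ (#s + 1 : K) * ∏ p ∈ s, (1 - (p : K)⁻¹) := ih hs
      _ ≤ (#s + 2) * (1 - (a : K)⁻¹) * ∏ p ∈ s, (1 - (p : K)⁻¹) := by gcongr
      _ = _ := by push_cast; ring

theorem Nat.le_card_primeFactors_add_one_mul_totient (n : ℕ) :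
    n ≤ (#n.primeFactors + 1) * n.totient := by
  have hprod := one_le_card_add_one_mul_prod_one_sub_inv (K := ℚ) n.primeFactors
    fun p hp => (prime_of_mem_primeFactors hp).two_le
  have : (n : ℚ) ≤ (#n.primeFactors + 1) * n.totient := by
    rw [totient_eq_mul_prod_factors]
    nlinarith [n.cast_nonneg (α := ℚ)]
  exact_mod_cast this

theorem Finset.two_pow_card_add_one_le_prod (S : Finset ℕ) (hS : ∀ p ∈ S, 2 ≤ p)
    (hcard : 3 ≤ #S) : 2 ^ (#S + 1) ≤ ∏ p ∈ S, p := by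
  obtain ⟨a, ha, ha4⟩ : ∃ a ∈ S, 4 ≤ a := by
    by_contra! hsmall
    have := card_le_card fun p hp => mem_Ico.mpr ⟨hS p hp, hsmall p hp⟩
    simp only [Nat.card_Ico] at this
    omega
  have hrest : 2 ^ #(S.erase a) ≤ ∏ p ∈ S.erase a, p :=
    pow_card_le_prod _ _ _ fun p hp => hS p (mem_of_mem_erase hp)
  rw [card_erase_of_mem ha] at hrest
  calc 2 ^ (#S + 1) = 4 * 2 ^ (#S - 1) := by
        rw [show #S + 1 = 2 + (#S - 1) by omega, pow_add]; rfl
    _ ≤ a * ∏ p ∈ S.erase a, p := Nat.mul_le_mul ha4 hrest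
    _ = ∏ p ∈ S, p := mul_prod_erase S id ha

theorem Nat.two_pow_card_primeFactors_add_one_le {n : ℕ} (hn : 6 < n) :
    2 ^ (#n.primeFactors + 1) ≤ n := by
  rcases le_or_gt 3 #n.primeFactors with hcard | hcard
  · calc 2 ^ (#n.primeFactors + 1) ≤ ∏ p ∈ n.primeFactors, p :=
          two_pow_card_add_one_le_prod _ (fun p hp => (prime_of_mem_primeFactors hp).two_le) hcard
      _ ≤ n := le_of_dvd (by omega) (prod_primeFactors_dvd n)
  · obtain rfl | h8 : n = 7 ∨ 8 ≤ n := by omega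
    · rw [Nat.Prime.primeFactors (by norm_num)]
      norm_num
    · calc 2 ^ (#n.primeFactors + 1) ≤ 2 ^ 3 := Nat.pow_le_pow_right two_pos (by omega)
        _ ≤ n := h8

theorem Nat.card_primeFactors_add_one_le_logb {n : ℕ} (hn : 6 < n) :
    (#n.primeFactors + 1 : ℝ) ≤ Real.logb 2 n := by
  rw [Real.le_logb_iff_rpow_le one_lt_two (by positivity)]
  exact_mod_cast two_pow_card_primeFactors_add_one_le hn

theorem totient_lower_bound_log2 (n : ℕ) (hn : 6 < n) :
    (n : ℝ) / Real.logb 2 n ≤ (Nat.totient n : ℝ) := by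
  have hlog : 0 < Real.logb 2 n := Real.logb_pos one_lt_two (by exact_mod_cast (by omega : 1 < n))
  rw [div_le_iff₀ hlog]
  calc (n : ℝ) ≤ (#n.primeFactors + 1) * n.totient := by
        exact_mod_cast n.le_card_primeFactors_add_one_mul_totient
    _ ≤ Real.logb 2 n * n.totient := by
        gcongr; exact Nat.card_primeFactors_add_one_le_logb hn
    _ = n.totient * Real.logb 2 n := mul_comm _ _
end

section
/- If n is an odd positive integer with n > 6, then Euler's totient function satisfies φ(n) ≥ 2n / (log₃(n) + 2). -/
open Finset Real

lemma prod_ratio_le (k : ℕ) : ∀ (S : Finset ℕ), S.card = k →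
    (∀ p ∈ S, 3 ≤ p ∧ Odd p) →
    ∏ p ∈ S, (p : ℝ) / ((p : ℝ) - 1) ≤ ((k : ℝ) + 2) / 2 := by
  induction k with
  | zero =>
    intro S hS _
    rw [Finset.card_eq_zero] at hS
    subst hS; norm_num
  | succ k ih =>
    intro S hS hall
    have hne : S.Nonempty := Finset.card_pos.mp (by omega)
    set m := S.max' hne with hm
    have hmem : m ∈ S := S.max'_mem hne
    have h3m : 3 ≤ m := (hall m hmem).1
    have hmodd : m % 2 = 1 := Nat.odd_iff.mp (hall m hmem).2
    -- m ≥ 2k+3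
    have hinj : Set.InjOn (fun p => p / 2) ↑S := by
      intro p hp q hq h
      have hp1 : p % 2 = 1 := Nat.odd_iff.mp (hall p hp).2
      have hq1 : q % 2 = 1 := Nat.odd_iff.mp (hall q hq).2
      simp only at h
      omega
    have hsub : S.image (· / 2) ⊆ Finset.Icc 1 (m / 2) := by
      intro x hx
      obtain ⟨p, hp, rfl⟩ := Finset.mem_image.mp hx
      have h3 : 3 ≤ p := (hall p hp).1
      have hle : p ≤ m := S.le_max' p hp
      simp only [Finset.mem_Icc]
      constructor
      · omega
      · exact Nat.div_le_div_right hle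
    have hcard : S.card ≤ m / 2 := by
      calc S.card = (S.image (· / 2)).card := (Finset.card_image_of_injOn hinj).symm
        _ ≤ (Finset.Icc 1 (m / 2)).card := Finset.card_le_card hsub
        _ = m / 2 := by simp
    have hmge : 2 * k + 3 ≤ m := by omega
    -- split off m
    have hprod : ∏ p ∈ S, (p : ℝ) / ((p : ℝ) - 1)
        = ((m : ℝ) / ((m : ℝ) - 1)) * ∏ p ∈ S.erase m, (p : ℝ) / ((p : ℝ) - 1) := by
      rw [← Finset.prod_erase_mul _ _ hmem]; ring
    have hcard' : (S.erase m).card = k := by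
      rw [Finset.card_erase_of_mem hmem, hS]; omega
    have hih := ih (S.erase m) hcard' (fun p hp => hall p (Finset.mem_of_mem_erase hp))
    have hpos : (0:ℝ) < (m : ℝ) - 1 := by
      have : (3:ℝ) ≤ (m:ℝ) := by exact_mod_cast h3m
      linarith
    have hfrac : (m : ℝ) / ((m : ℝ) - 1) ≤ (2*(k:ℝ)+3) / (2*(k:ℝ)+2) := by
      have hk0 : (0:ℝ) ≤ (k:ℝ) := Nat.cast_nonneg k
      rw [div_le_div_iff₀ hpos (by linarith)]
      have hmc : (2*(k:ℝ)+3) ≤ (m : ℝ) := by exact_mod_cast hmge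
      nlinarith
    have hprodnn : (0:ℝ) ≤ ∏ p ∈ S.erase m, (p : ℝ) / ((p : ℝ) - 1) := by
      apply Finset.prod_nonneg
      intro p hp
      have h3 : 3 ≤ p := (hall p (Finset.mem_of_mem_erase hp)).1
      have : (3:ℝ) ≤ (p:ℝ) := by exact_mod_cast h3
      exact div_nonneg (by linarith) (by linarith)
    rw [hprod]
    push_cast
    have hk0 : (0:ℝ) ≤ (k:ℝ) := Nat.cast_nonneg k
    calc ((m : ℝ) / ((m : ℝ) - 1)) * ∏ p ∈ S.erase m, (p : ℝ) / ((p : ℝ) - 1)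
        ≤ ((2*(k:ℝ)+3) / (2*(k:ℝ)+2)) * (((k : ℝ) + 2) / 2) := by
          apply mul_le_mul hfrac hih hprodnn
          positivity
      _ ≤ ((k:ℝ) + 1 + 2) / 2 := by
          rw [div_mul_div_comm, div_le_div_iff₀ (by positivity) (by norm_num)]
          nlinarith

theorem totient_lower_bound_odd_log3 (n : ℕ) (hodd : Odd n) (hn : 6 < n) :
    2 * (n : ℝ) / (Real.logb 3 n + 2) ≤ (Nat.totient n : ℝ) := by
  have hn0 : 0 < n := by omega
  set S := n.primeFactors with hSdef
  have hall : ∀ p ∈ S, 3 ≤ p ∧ Odd p := by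
    intro p hp
    have hprime := Nat.prime_of_mem_primeFactors hp
    have hdvd := Nat.dvd_of_mem_primeFactors hp
    have hp2 : p ≠ 2 := by
      rintro rfl
      have h1 := Nat.odd_iff.mp hodd
      omega
    have hodd' : Odd p := hprime.odd_of_ne_two hp2
    exact ⟨by have := hprime.two_le; omega, hodd'⟩
  set k := S.card with hk
  -- 3^k ≤ n
  have h3k : 3 ^ k ≤ n := by
    calc 3 ^ k ≤ ∏ p ∈ S, p := by
          rw [hk]
          rw [← Finset.prod_const]
          exact Finset.prod_le_prod' (fun p hp => (hall p hp).1)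
      _ ≤ n := Nat.le_of_dvd hn0 (Nat.prod_primeFactors_dvd n)
  have hklog : (k : ℝ) ≤ Real.logb 3 n := by
    have h1 : Real.logb 3 ((3:ℝ) ^ k) ≤ Real.logb 3 n := by
      apply Real.logb_le_logb_of_le (by norm_num) (by positivity)
      exact_mod_cast h3k
    rwa [Real.logb_pow, Real.logb_self_eq_one (by norm_num), mul_one] at h1
  -- totient formula
  have hformula : (Nat.totient n : ℝ) * ∏ p ∈ S, (p:ℝ) = (n:ℝ) * ∏ p ∈ S, ((p:ℝ) - 1) := by
    have := Nat.totient_mul_prod_primeFactors n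
    have hc : ((Nat.totient n * ∏ p ∈ S, p : ℕ) : ℝ) = ((n * ∏ p ∈ S, (p-1) : ℕ) : ℝ) := by
      exact_mod_cast congrArg (Nat.cast (R := ℝ)) this
    push_cast at hc
    rw [hc]
    congr 1
    apply Finset.prod_congr rfl
    intro p hp
    have h3 := (hall p hp).1
    push_cast [Nat.cast_sub (by omega : 1 ≤ p)]
    ring
  have hprodpos : (0:ℝ) < ∏ p ∈ S, ((p:ℝ) - 1) := by
    apply Finset.prod_pos
    intro p hp
    have : (3:ℝ) ≤ (p:ℝ) := by exact_mod_cast (hall p hp).1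
    linarith
  have hprodppos : (0:ℝ) < ∏ p ∈ S, (p:ℝ) := by
    apply Finset.prod_pos
    intro p hp
    have : (3:ℝ) ≤ (p:ℝ) := by exact_mod_cast (hall p hp).1
    linarith
  have hratio : ∏ p ∈ S, (p : ℝ) / ((p : ℝ) - 1) ≤ ((k : ℝ) + 2) / 2 :=
    prod_ratio_le k S rfl hall
  have hratioeq : ∏ p ∈ S, (p : ℝ) / ((p : ℝ) - 1)
      = (∏ p ∈ S, (p:ℝ)) / ∏ p ∈ S, ((p:ℝ) - 1) := by
    rw [Finset.prod_div_distrib]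
  -- n = φ n * ∏ p/(p-1)
  have hneq : (n : ℝ) = (Nat.totient n : ℝ) * ∏ p ∈ S, (p : ℝ) / ((p : ℝ) - 1) := by
    rw [hratioeq, ← mul_div_assoc, eq_div_iff (ne_of_gt hprodpos)]
    exact hformula.symm
  have htotpos : (0:ℝ) < (Nat.totient n : ℝ) := by
    exact_mod_cast Nat.totient_pos.mpr hn0
  have hlogpos : (0:ℝ) < Real.logb 3 n + 2 := by
    have : (0:ℝ) ≤ (k:ℝ) := Nat.cast_nonneg k
    linarith
  rw [div_le_iff₀ hlogpos]
  have step1 : 2 * (n:ℝ) ≤ (Nat.totient n : ℝ) * ((k:ℝ) + 2) := by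
    calc 2 * (n:ℝ) = 2 * ((Nat.totient n : ℝ) * ∏ p ∈ S, (p : ℝ) / ((p : ℝ) - 1)) := by
          rw [← hneq]
      _ ≤ 2 * ((Nat.totient n : ℝ) * (((k:ℝ) + 2) / 2)) := by
          apply mul_le_mul_of_nonneg_left _ (by norm_num)
          exact mul_le_mul_of_nonneg_left hratio (le_of_lt htotpos)
      _ = (Nat.totient n : ℝ) * ((k:ℝ) + 2) := by ring
  calc 2 * (n:ℝ) ≤ (Nat.totient n : ℝ) * ((k:ℝ) + 2) := step1
    _ ≤ (Nat.totient n : ℝ) * (Real.logb 3 n + 2) := by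
        apply mul_le_mul_of_nonneg_left (by linarith) (le_of_lt htotpos)
end

section
/- Let G be a finite group acting transitively on a finite set Ω, and let H be a subgroup of G that also acts transitively on Ω. If every intersecting set of H has cardinality at most |H|/|Ω|, then every intersecting set of G has cardinality at most |G|/|Ω|. -/
theorem intersecting_bound_of_transitive_subgroup
    {G : Type*} [Group G] [Fintype G] {Ω : Type*} [Fintype Ω] [MulAction G Ω]
    (hG : MulAction.IsPretransitive G Ω) (H : Subgroup G)
    (hH : ∀ ω ω' : Ω, ∃ h ∈ H, h • ω = ω')
    (hHbound : ∀ T : Finset G, (∀ g ∈ T, g ∈ H) →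
      (∀ g ∈ T, ∀ h ∈ T, ∃ ω : Ω, (g * h⁻¹) • ω = ω) →
      T.card * Fintype.card Ω ≤ Nat.card H)
    (S : Finset G)
    (hS : ∀ g ∈ S, ∀ h ∈ S, ∃ ω : Ω, (g * h⁻¹) • ω = ω) :
    S.card * Fintype.card Ω ≤ Fintype.card G := by
  classical
  set Q := Quotient (QuotientGroup.rightRel H) with hQ
  have : Fintype Q := Fintype.ofEquiv _ (QuotientGroup.quotientRightRelEquivQuotientLeftRel H).symm
  have key : ∀ q : Q,
      (S.filter (fun g => (Quotient.mk (QuotientGroup.rightRel H) g : Q) = q)).card *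
        Fintype.card Ω ≤ Nat.card H := by
    intro q
    set g0 := q.out with hg0
    set F := S.filter (fun g => (Quotient.mk (QuotientGroup.rightRel H) g : Q) = q) with hF
    set T := F.image (fun x => x * g0⁻¹) with hT
    have hcard : T.card = F.card := by
      apply Finset.card_image_of_injective
      intro a b hab
      exact mul_right_cancel hab
    have hmem : ∀ x ∈ F, x * g0⁻¹ ∈ H := by
      intro x hx
      have hx' := (Finset.mem_filter.mp hx).2
      have : (QuotientGroup.rightRel H) x g0 :=
        Quotient.exact (hx'.trans q.out_eq.symm)
      have h2 : g0 * x⁻¹ ∈ H := (QuotientGroup.rightRel_apply).mp this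
      have : (g0 * x⁻¹)⁻¹ ∈ H := H.inv_mem h2
      simpa using this
    have hb := hHbound T
      (by
        intro g hg
        obtain ⟨x, hx, rfl⟩ := Finset.mem_image.mp hg
        exact hmem x hx)
      (by
        intro a ha b hb
        obtain ⟨x, hx, rfl⟩ := Finset.mem_image.mp ha
        obtain ⟨y, hy, rfl⟩ := Finset.mem_image.mp hb
        have : x * g0⁻¹ * (y * g0⁻¹)⁻¹ = x * y⁻¹ := by group
        rw [this]
        exact hS x (Finset.mem_filter.mp hx).1 y (Finset.mem_filter.mp hy).1)
    rw [hcard] at hb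
    exact hb
  have hsum : S.card = ∑ q : Q,
      (S.filter (fun g => (Quotient.mk (QuotientGroup.rightRel H) g : Q) = q)).card :=
    Finset.card_eq_sum_card_fiberwise (fun x _ => Finset.mem_univ _)
  calc S.card * Fintype.card Ω
      = ∑ q : Q, (S.filter (fun g => (Quotient.mk (QuotientGroup.rightRel H) g : Q) = q)).card
          * Fintype.card Ω := by rw [hsum, Finset.sum_mul]
    _ ≤ ∑ _q : Q, Nat.card H := Finset.sum_le_sum (fun q _ => key q)
    _ = Fintype.card Q * Nat.card H := by rw [Finset.sum_const, smul_eq_mul, Finset.card_univ]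
    _ = Fintype.card G := by
        rw [Fintype.card_congr (QuotientGroup.quotientRightRelEquivQuotientLeftRel H),
          ← Nat.card_eq_fintype_card, ← Nat.card_eq_fintype_card,
          ← Subgroup.card_eq_card_quotient_mul_card_subgroup H]
end

section
/- Let Γ be a finite vertex-transitive graph on n vertices, let C be a clique of Γ and S an independent set (coclique) of Γ. Then |C| · |S| ≤ n. -/
open Finset

theorem clique_coclique_bound {V : Type*} [Fintype V] (Γ : SimpleGraph V)
    (htrans : ∀ u v : V, ∃ φ : Γ ≃g Γ, φ u = v)
    (C S : Finset V) (hC : Γ.IsClique (C : Set V)) (hS : Γᶜ.IsClique (S : Set V)) :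
    C.card * S.card ≤ Fintype.card V := by
  classical
  haveI : Finite (Γ ≃g Γ) :=
    Finite.of_injective (fun f => (f.toEquiv : V ≃ V)) RelIso.toEquiv_injective
  letI : Fintype (Γ ≃g Γ) := Fintype.ofFinite _
  set G : Finset (Γ ≃g Γ) := Finset.univ with hG
  -- N c s : number of automorphisms sending c to s
  set N : V → V → ℕ := fun c s => (G.filter (fun g : Γ ≃g Γ => g c = s)).card with hN
  -- N c s = N c c
  have hNconst : ∀ c s : V, N c s = N c c := by
    intro c s
    obtain ⟨h, hh⟩ := htrans c s
    refine Finset.card_bij' (fun g _ => g.trans h.symm) (fun g _ => g.trans h) ?_ ?_ ?_ ?_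
    · intro g hg
      simp only [hN, Finset.mem_filter] at hg ⊢
      exact ⟨Finset.mem_univ _, by simp [hg.2, ← hh]⟩
    · intro g hg
      simp only [hN, Finset.mem_filter] at hg ⊢
      exact ⟨Finset.mem_univ _, by simp [hg.2, hh]⟩
    · intro g _; ext v; simp
    · intro g _; ext v; simp
  -- partition of G by image of c
  have hpart : ∀ c : V, ∑ v : V, N c v = G.card := by
    intro c
    exact (Finset.card_eq_sum_card_fiberwise (f := fun g : Γ ≃g Γ => g c)
      (fun g _ => Finset.mem_univ _)).symm
  have horbit : ∀ c : V, Fintype.card V * N c c = G.card := by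
    intro c
    rw [← hpart c]
    rw [Finset.sum_congr rfl (fun v _ => hNconst c v)]
    simp [Finset.card_univ, mul_comm]
  -- the double count
  set T : ℕ := ∑ g ∈ G, (C.filter (fun c => g c ∈ S)).card with hT
  have hTle : T ≤ G.card := by
    rw [hT]
    calc ∑ g ∈ G, (C.filter (fun c => g c ∈ S)).card
        ≤ ∑ _g ∈ G, 1 := by
          refine Finset.sum_le_sum ?_
          intro g _
          refine Finset.card_le_one.mpr ?_
          intro a ha b hb
          simp only [Finset.mem_filter] at ha hb
          by_contra hab
          have hadj : Γ.Adj a b := hC ha.1 hb.1 hab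
          have hgadj : Γ.Adj (g a) (g b) := g.map_adj_iff.mpr hadj
          have hne : g a ≠ g b := fun h => hab (g.injective h)
          have : Γᶜ.Adj (g a) (g b) := hS ha.2 hb.2 hne
          exact this.2 hgadj
      _ = G.card := by simp
  have hTeq : T = ∑ c ∈ C, ∑ s ∈ S, N c s := by
    rw [hT]
    have : ∀ g ∈ G, (C.filter (fun c => g c ∈ S)).card
        = ∑ c ∈ C, (if g c ∈ S then 1 else 0) := by
      intro g _
      rw [Finset.card_filter]
    rw [Finset.sum_congr rfl this, Finset.sum_comm]
    refine Finset.sum_congr rfl ?_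
    intro c _
    rw [← Finset.card_filter]
    refine Finset.card_eq_sum_card_fiberwise (f := fun g : Γ ≃g Γ => g c)
      (fun g hg => (Finset.mem_filter.mp hg).2) |>.trans ?_
    refine Finset.sum_congr rfl ?_
    intro s hs
    congr 1
    ext g
    simp only [hN, Finset.mem_filter, Finset.mem_univ, true_and, hG]
    constructor
    · rintro ⟨_, h2⟩; exact h2
    · intro h2; exact ⟨h2 ▸ hs, h2⟩
  -- combine
  have hmain : C.card * S.card * G.card ≤ Fintype.card V * G.card := by
    calc C.card * S.card * G.card
        = ∑ c ∈ C, ∑ s ∈ S, G.card := by simp [Finset.sum_const, mul_assoc]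
      _ = ∑ c ∈ C, ∑ s ∈ S, Fintype.card V * N c s := by
          refine Finset.sum_congr rfl fun c _ => Finset.sum_congr rfl fun s _ => ?_
          rw [hNconst c s, horbit c]
      _ = Fintype.card V * T := by
          rw [hTeq, Finset.mul_sum]
          exact Finset.sum_congr rfl fun c _ => (Finset.mul_sum _ _ _).symm
      _ ≤ Fintype.card V * G.card := Nat.mul_le_mul_left _ hTle
  have hGpos : 0 < G.card := Finset.card_pos.mpr ⟨RelIso.refl _, Finset.mem_univ _⟩
  exact Nat.le_of_mul_le_mul_right hmain hGpos
end

section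
/- Let G be a finite group acting transitively on a finite set Ω, and suppose G contains a subgroup H that acts regularly on Ω. Then every intersecting set in G has cardinality at most |G|/|Ω|. -/
theorem intersecting_bound_of_regular_subgroup
    {G : Type*} [Group G] [Fintype G] {Ω : Type*} [Fintype Ω] [MulAction G Ω]
    (hG : MulAction.IsPretransitive G Ω) (H : Subgroup G)
    (hHtrans : ∀ ω ω' : Ω, ∃ h ∈ H, h • ω = ω')
    (hHreg : ∀ h ∈ H, h ≠ 1 → ∀ ω : Ω, h • ω ≠ ω)
    (S : Finset G)
    (hS : ∀ g ∈ S, ∀ h ∈ S, ∃ ω : Ω, (g * h⁻¹) • ω = ω) :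
    S.card * Fintype.card Ω ≤ Fintype.card G := by
  rcases isEmpty_or_nonempty Ω with hΩ | hne
  · simp
  obtain ⟨ω₀⟩ := hne
  classical
  -- |Ω| = |H|
  have hbij : Function.Bijective (fun h : H => ((h : G) • ω₀ : Ω)) := by
    constructor
    · intro h₁ h₂ hh
      simp only at hh
      by_contra hne
      have hne' : (h₂ : G)⁻¹ * h₁ ≠ 1 := by
        intro h
        apply hne
        ext
        exact (inv_mul_eq_one.mp h).symm
      exact hHreg _ (H.mul_mem (H.inv_mem h₂.2) h₁.2) hne' ω₀ (by
        rw [mul_smul, hh, inv_smul_smul])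
    · intro ω
      obtain ⟨h, hh, hsm⟩ := hHtrans ω₀ ω
      exact ⟨⟨h, hh⟩, hsm⟩
  have hΩH : Fintype.card Ω = Fintype.card H := (Fintype.card_of_bijective hbij).symm
  -- injective map S × H → G
  have hinj : Function.Injective (fun p : S × H => (p.1 : G) * (p.2 : G)) := by
    rintro ⟨⟨g₁, hg₁⟩, h₁⟩ ⟨⟨g₂, hg₂⟩, h₂⟩ heq
    simp only at heq
    have hg1 : g₁ = g₂ * (h₂ : G) * (h₁ : G)⁻¹ := by
      exact eq_mul_inv_of_mul_eq heq
    have hmem : g₂⁻¹ * g₁ = (h₂ : G) * (h₁ : G)⁻¹ := by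
      rw [hg1]; group
    have hHmem : g₂⁻¹ * g₁ ∈ H := hmem ▸ H.mul_mem h₂.2 (H.inv_mem h₁.2)
    obtain ⟨ω, hω⟩ := hS g₁ hg₁ g₂ hg₂
    have hfix : (g₂⁻¹ * g₁) • (g₂⁻¹ • ω) = g₂⁻¹ • ω := by
      have := congrArg (fun x => g₂⁻¹ • x) hω
      simpa [mul_smul] using this
    have h1 : g₂⁻¹ * g₁ = 1 := by
      by_contra hne
      exact hHreg _ hHmem hne _ hfix
    have hgg : g₁ = g₂ := by
      exact (inv_mul_eq_one.mp h1).symm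
    subst hgg
    have : (h₁ : G) = (h₂ : G) := mul_left_cancel heq
    simp [Prod.ext_iff, Subtype.ext this]
  have := Fintype.card_le_of_injective _ hinj
  simpa [Fintype.card_prod, hΩH, Fintype.card_coe] using this
end

section
/- Let G be a finite group acting 2-transitively on a finite set Ω with |Ω| ≥ 2, and let 𝒟 be the set of derangements in G. Then |G| ≥ 2|𝒟|; that is, at most half of the elements of G are derangements. -/
open MulAction Finset

theorem derangements_at_most_half
    {G : Type*} [Group G] [Fintype G] [DecidableEq G]
    {Ω : Type*} [Fintype Ω] [DecidableEq Ω] [MulAction G Ω]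
    (hcard : 2 ≤ Fintype.card Ω)
    (h2 : ∀ a b c d : Ω, a ≠ b → c ≠ d → ∃ g : G, g • a = c ∧ g • b = d)
    (D : Finset G) (hD : D = Finset.univ.filter (fun g : G => ∀ ω : Ω, g • ω ≠ ω)) :
    2 * D.card ≤ Fintype.card G := by
  classical
  have hnt : Nontrivial Ω := Fintype.one_lt_card_iff_nontrivial.mp (by omega)
  -- transitivity
  have htrans : ∀ a c : Ω, ∃ g : G, g • a = c := by
    intro a c
    obtain ⟨b, hb⟩ := exists_ne a
    obtain ⟨d, hd⟩ := exists_ne c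
    obtain ⟨g, hg1, _⟩ := h2 a b c d (hb.symm) (hd.symm)
    exact ⟨g, hg1⟩
  letI : Fintype (Quotient (orbitRel G Ω)) := Fintype.ofFinite _
  letI : Fintype (Quotient (orbitRel G (Ω × Ω))) := Fintype.ofFinite _
  -- one orbit on Ω
  have horb1 : Fintype.card (Quotient (orbitRel G Ω)) = 1 := by
    have : Subsingleton (orbitRel.Quotient G Ω) :=
      (pretransitive_iff_subsingleton_quotient G Ω).mp ⟨fun a c => htrans a c⟩
    have : Nonempty Ω := ⟨Classical.arbitrary Ω⟩
    exact Fintype.card_eq_one_iff.mpr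
      ⟨Quotient.mk _ (Classical.arbitrary Ω), fun y => Subsingleton.elim _ _⟩
  -- two orbits on Ω × Ω
  have horb2 : Fintype.card (Quotient (orbitRel G (Ω × Ω))) = 2 := by
    obtain ⟨a, b, hab⟩ := exists_pair_ne Ω
    rw [← Nat.card_eq_fintype_card, Nat.card_eq_two_iff]
    refine ⟨Quotient.mk _ (a, a), Quotient.mk _ (a, b), ?_, ?_⟩
    · intro h
      obtain ⟨g, hg⟩ := Quotient.eq.mp h
      simp only [Prod.smul_def, Prod.ext_iff] at hg
      exact hab (smul_left_cancel g (hg.1.trans hg.2.symm))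
    · ext z
      simp only [Set.mem_insert_iff, Set.mem_singleton_iff, Set.mem_univ, iff_true]
      obtain ⟨⟨c, d⟩⟩ := z
      by_cases hcd : c = d
      · left
        subst hcd
        obtain ⟨g, hg⟩ := htrans a c
        exact Quotient.sound ⟨g, by simp [Prod.smul_def, hg]⟩
      · right
        obtain ⟨g, hg1, hg2⟩ := h2 a b c d hab (Ne.symm (Ne.symm hcd))
        exact Quotient.sound ⟨g, by simp [Prod.smul_def, hg1, hg2]⟩
  -- Burnside on Ω
  have hB1 : (∑ g : G, Fintype.card (fixedBy Ω g)) = Fintype.card G := by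
    have := sum_card_fixedBy_eq_card_orbits_mul_card_group G Ω
    rwa [horb1, one_mul] at this
  -- Burnside on Ω × Ω
  have hB2 : (∑ g : G, Fintype.card (fixedBy (Ω × Ω) g)) = 2 * Fintype.card G := by
    have := sum_card_fixedBy_eq_card_orbits_mul_card_group G (Ω × Ω)
    rwa [horb2] at this
  -- card fixedBy on product is square
  have hsq : ∀ g : G, Fintype.card (fixedBy (Ω × Ω) g)
      = Fintype.card (fixedBy Ω g) * Fintype.card (fixedBy Ω g) := by
    intro g
    rw [← Fintype.card_prod]
    apply Fintype.card_congr
    refine (Equiv.setCongr ?_).trans (Equiv.Set.prod (fixedBy Ω g) (fixedBy Ω g))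
    ext ⟨x, y⟩
    simp [fixedBy, Prod.smul_def, Prod.ext_iff, Set.mem_prod]
  set F : G → ℤ := fun g => (Fintype.card (fixedBy Ω g) : ℤ) with hF
  have hSum1 : ∑ g : G, F g = (Fintype.card G : ℤ) := by
    rw [hF, ← Nat.cast_sum, hB1]
  have hSum2 : ∑ g : G, F g * F g = 2 * (Fintype.card G : ℤ) := by
    have : ∑ g : G, F g * F g
        = ((∑ g : G, Fintype.card (fixedBy (Ω × Ω) g) : ℕ) : ℤ) := by
      rw [Nat.cast_sum]
      exact Finset.sum_congr rfl fun g _ => by rw [hsq g]; push_cast; ring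
    rw [this, hB2]; push_cast; ring
  have hkey : ∑ g : G, (F g - 2) ^ 2 = 2 * (Fintype.card G : ℤ) := by
    have h4 : (4 : ℤ) * (Fintype.card G : ℤ) = ∑ _g : G, (4 : ℤ) := by
      rw [Finset.sum_const, Finset.card_univ, nsmul_eq_mul]; ring
    have h1 : ∑ g : G, (F g - 2) ^ 2
        = (∑ g : G, F g * F g) - 4 * (∑ g : G, F g) + 4 * (Fintype.card G : ℤ) := by
      rw [Finset.mul_sum, ← Finset.sum_sub_distrib, h4, ← Finset.sum_add_distrib]
      exact Finset.sum_congr rfl fun g _ => by ring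
    rw [h1, hSum1, hSum2]; ring
  -- derangements contribute 4 each
  have hDval : ∀ g ∈ D, (F g - 2) ^ 2 = 4 := by
    intro g hg
    rw [hD, Finset.mem_filter] at hg
    have : Fintype.card (fixedBy Ω g) = 0 := by
      rw [Fintype.card_eq_zero_iff]
      exact ⟨fun ⟨x, hx⟩ => hg.2 x hx⟩
    rw [hF]; simp [this]
  have hle : (4 : ℤ) * D.card ≤ 2 * Fintype.card G := by
    calc (4 : ℤ) * D.card = ∑ g ∈ D, (F g - 2) ^ 2 := by
          rw [Finset.sum_congr rfl hDval, Finset.sum_const, nsmul_eq_mul]; ring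
      _ ≤ ∑ g : G, (F g - 2) ^ 2 :=
          Finset.sum_le_sum_of_subset_of_nonneg (Finset.subset_univ D)
            (fun i _ _ => sq_nonneg _)
      _ = 2 * (Fintype.card G : ℤ) := hkey
  have : (2 : ℤ) * D.card ≤ (Fintype.card G : ℤ) := by linarith
  exact_mod_cast this
end

section
/- Let G be a finite group acting 2-transitively on Ω and suppose the minimum eigenvalue of the derangement graph Γ_G equals -|𝒟|/(|Ω|-1), where 𝒟 is the set of derangements. Then every intersecting set in G has cardinality at most |G|/|Ω|. -/
/-!
Transitivity and Jordan's theorem give a derangement, so the derangement graph on `G` is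
regular of positive degree `d = |𝒟|`, and an intersecting set is an independent set in it.
Hoffman's ratio bound, with least eigenvalue at least `τ = -d / (|Ω| - 1)`, bounds an independent
set by `|G| · (-τ) / (d - τ) = |G| / |Ω|`.
-/

open Finset Matrix

namespace MulAction

variable {G α : Type*} [Group G] [MulAction G α]

theorem isPretransitive_of_forall_exists_smul_eq_and_smul_eq [Nontrivial α]
    (h2 : ∀ a b c d : α, a ≠ b → c ≠ d → ∃ g : G, g • a = c ∧ g • b = d) :
    IsPretransitive G α where
  exists_smul_eq a c := by
    obtain ⟨b, hb⟩ := exists_ne a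
    obtain ⟨d, hd⟩ := exists_ne c
    obtain ⟨g, hg, -⟩ := h2 a b c d hb.symm hd.symm
    exact ⟨g, hg⟩

variable (G α) in
/-- Jordan: by Burnside's lemma the average number of fixed points is `1`, while the identity fixes
more than one point. -/
theorem exists_forall_smul_ne [Fintype G] [Fintype α] [IsPretransitive G α] [Nontrivial α] :
    ∃ g : G, ∀ a : α, g • a ≠ a := by
  classical
  by_contra! hfix
  have : Subsingleton (orbitRel.Quotient G α) :=
    (pretransitive_iff_subsingleton_quotient G α).mp ‹_›
  have hburnside : ∑ g : G, Fintype.card (fixedBy α g) = ∑ _g : G, 1 := by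
    rw [sum_card_fixedBy_eq_card_orbits_mul_card_group, Fintype.card_eq_one_iff.mpr
      ⟨Quotient.mk _ (Classical.arbitrary α), fun _ => Subsingleton.elim _ _⟩]
    simp
  refine hburnside.not_gt (Finset.sum_lt_sum (fun g _ => ?_) ⟨1, mem_univ _, ?_⟩)
  · obtain ⟨a, ha⟩ := hfix g
    exact Fintype.card_pos_iff.mpr ⟨⟨a, ha⟩⟩
  · simpa [fixedBy_one_eq_univ] using Fintype.one_lt_card

end MulAction

namespace Matrix

variable {ι : Type*} [Fintype ι] [DecidableEq ι]

theorem IsHermitian.posSemidef_sub_smul_one {A : Matrix ι ι ℝ} (hA : A.IsHermitian) {τ : ℝ}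
    (hτ : ∀ μ ∈ spectrum ℝ A, τ ≤ μ) : (A - τ • 1).PosSemidef := by
  refine posSemidef_iff_isHermitian_and_spectrum_nonneg.mpr
    ⟨hA.sub (isHermitian_one.smul (IsSelfAdjoint.all τ)), ?_⟩
  rw [← Algebra.algebraMap_eq_smul_one, ← spectrum.sub_singleton_eq]
  rintro _ ⟨μ, hμ, _, rfl, rfl⟩
  exact sub_nonneg.mpr (hτ μ hμ)

/-- Hoffman's ratio bound. The proof evaluates the quadratic form of `A - τ • 1` at
`card ι • 1_S - #S • 1`, which is orthogonal to the eigenvector `1`. -/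
theorem IsHermitian.ratio_bound {A : Matrix ι ι ℝ} (hA : A.IsHermitian) {d τ : ℝ}
    (hA1 : A *ᵥ 1 = d • 1) (hτ : ∀ μ ∈ spectrum ℝ A, τ ≤ μ) {S : Finset ι} (hS : S.Nonempty)
    (hSA : ∀ i ∈ S, ∀ j ∈ S, A i j = 0) :
    #S * (d - τ) ≤ -τ * Fintype.card ι := by
  set n : ℝ := (Fintype.card ι : ℝ)
  set s : ℝ := (#S : ℝ)
  set x : ι → ℝ := fun i => if i ∈ S then 1 else 0
  have hx1 : x ⬝ᵥ 1 = s := by simp [x, s, dotProduct]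
  have hxx : x ⬝ᵥ x = s := by simp [x, s, dotProduct]
  have h11 : (1 : ι → ℝ) ⬝ᵥ 1 = n := by simp [n, dotProduct]
  have hxAx : x ⬝ᵥ A *ᵥ x = 0 := by
    simpa [x, dotProduct, mulVec] using sum_eq_zero fun i hi => sum_eq_zero (hSA i hi)
  have h1Ax : 1 ⬝ᵥ A *ᵥ x = d * s := by
    rw [dotProduct_mulVec, ← mulVec_transpose, ← conjTranspose_eq_transpose_of_trivial, hA, hA1,
      smul_dotProduct, dotProduct_comm, hx1, smul_eq_mul]
  have hquad := (hA.posSemidef_sub_smul_one hτ).dotProduct_mulVec_nonneg (n • x - s • 1)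
  simp only [star_trivial, sub_mulVec, smul_mulVec, one_mulVec, mulVec_sub, mulVec_smul, hA1,
    dotProduct_sub, sub_dotProduct, dotProduct_smul, smul_dotProduct, hxAx, h1Ax, hx1, hxx, h11,
    dotProduct_comm 1 x, smul_eq_mul] at hquad
  have hs : 0 < s := by simpa [s] using hS.card_pos
  have hsn : s ≤ n := by simpa [s, n] using card_le_univ S
  nlinarith [mul_pos hs (hs.trans_le hsn)]

end Matrix

section Cayley

variable {G : Type*} [Group G] [DecidableEq G]

def cayleyMatrix (D : Finset G) : Matrix G G ℝ :=
  Matrix.of fun g h => if g * h⁻¹ ∈ D then 1 else 0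

theorem cayleyMatrix_isHermitian {D : Finset G} (hD : ∀ g, g⁻¹ ∈ D ↔ g ∈ D) :
    (cayleyMatrix D).IsHermitian := by
  ext g h
  simp [cayleyMatrix, ← hD (h * g⁻¹)]

theorem cayleyMatrix_mulVec_one [Fintype G] (D : Finset G) :
    cayleyMatrix D *ᵥ 1 = (#D : ℝ) • 1 := by
  ext g
  simpa [cayleyMatrix, mulVec, dotProduct] using Fintype.sum_equiv
    ((Equiv.inv G).trans (Equiv.mulLeft g)) _ (fun u => if u ∈ D then (1 : ℝ) else 0) fun _ => rfl

end Cayley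

theorem intersecting_bound_of_min_eigenvalue_general
    {G : Type*} [Group G] [Fintype G] [DecidableEq G]
    {Ω : Type*} [Fintype Ω] [DecidableEq Ω] [MulAction G Ω]
    (hcard : 2 ≤ Fintype.card Ω)
    (h2 : ∀ a b c d : Ω, a ≠ b → c ≠ d → ∃ g : G, g • a = c ∧ g • b = d)
    (D : Finset G) (hD : D = Finset.univ.filter (fun g : G => ∀ ω : Ω, g • ω ≠ ω))
    (A : Matrix G G ℝ)
    (hA : ∀ g h : G, A g h = if g * h⁻¹ ∈ D then 1 else 0)
    (hmin : ∀ μ ∈ spectrum ℝ A, -(D.card : ℝ) / ((Fintype.card Ω : ℝ) - 1) ≤ μ)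
    (S : Finset G)
    (hS : ∀ g ∈ S, ∀ h ∈ S, ∃ ω : Ω, (g * h⁻¹) • ω = ω) :
    S.card * Fintype.card Ω ≤ Fintype.card G := by
  have : Nontrivial Ω := Fintype.one_lt_card_iff_nontrivial.mp hcard
  have : MulAction.IsPretransitive G Ω := MulAction.isPretransitive_of_forall_exists_smul_eq_and_smul_eq h2
  obtain ⟨g₀, hg₀⟩ := MulAction.exists_forall_smul_ne G Ω
  obtain rfl : A = cayleyMatrix D := Matrix.ext hA
  rcases S.eq_empty_or_nonempty with rfl | hS₀
  · simp
  have hDinv : ∀ g, g⁻¹ ∈ D ↔ g ∈ D := by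
    subst hD; simp [← MulAction.mem_fixedBy, MulAction.fixedBy_inv]
  have hSD : ∀ g ∈ S, ∀ h ∈ S, cayleyMatrix D g h = 0 := by
    intro g hg h hh
    obtain ⟨ω, hω⟩ := hS g hg h hh
    simpa [cayleyMatrix, hD] using ⟨ω, hω⟩
  have hbound := (cayleyMatrix_isHermitian hDinv).ratio_bound (cayleyMatrix_mulVec_one D) hmin
    hS₀ hSD
  have hd : (0 : ℝ) < #D := by
    exact_mod_cast card_pos.mpr ⟨g₀, by simpa [hD] using hg₀⟩
  have hk : (0 : ℝ) < Fintype.card Ω - 1 := by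
    have : (2 : ℝ) ≤ Fintype.card Ω := by exact_mod_cast hcard
    linarith
  field_simp at hbound
  exact_mod_cast (by linarith : (#S * Fintype.card Ω : ℝ) ≤ Fintype.card G)

theorem intersecting_bound_of_min_eigenvalue
    {G : Type*} [Group G] [Fintype G] [DecidableEq G]
    {Ω : Type*} [Fintype Ω] [DecidableEq Ω] [MulAction G Ω]
    (hcard : 2 ≤ Fintype.card Ω)
    (h2 : ∀ a b c d : Ω, a ≠ b → c ≠ d → ∃ g : G, g • a = c ∧ g • b = d)
    (D : Finset G) (hD : D = Finset.univ.filter (fun g : G => ∀ ω : Ω, g • ω ≠ ω))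
    (A : Matrix G G ℝ)
    (hA : ∀ g h : G, A g h = if g * h⁻¹ ∈ D then 1 else 0)
    (hspec : -(D.card : ℝ) / ((Fintype.card Ω : ℝ) - 1) ∈ spectrum ℝ A)
    (hmin : ∀ μ ∈ spectrum ℝ A, -(D.card : ℝ) / ((Fintype.card Ω : ℝ) - 1) ≤ μ)
    (S : Finset G)
    (hS : ∀ g ∈ S, ∀ h ∈ S, ∃ ω : Ω, (g * h⁻¹) • ω = ω) :
    S.card * Fintype.card Ω ≤ Fintype.card G :=
  intersecting_bound_of_min_eigenvalue_general hcard h2 D hD A hA hmin S hS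
end
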